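/- Let V be a real vector space of dimension 4 and let w₀, w₁ ∈ V be linearly independent. Then for every neighborhood N₁ of w₁ there exist w₂ ∈ N₁ and a neighborhood N₀ of w₀ such that for every w₀' ∈ N₀ there exists w₃ ∈ N₁ with w₀' ∈ span{w₁, w₂, w₃} and w₀' ∉ span{wⱼ} for j = 1, 2, 3. -/
import Mathlib


/-- Lemma 7.12 ([FIKO, Lemma 6.23]): given linearly independent `w₀, w₁` in `ℝ⁴`, for every
neighborhood `N₁` of `w₁` there exist `w₂ ∈ N₁` and a neighborhood `N₀` of `w₀` such that
every `w₀' ∈ N₀` lies in the span of `{w₁, w₂, w₃}` for some `w₃ ∈ N₁`, without being a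
scalar multiple of any of `w₁, w₂, w₃`. -/
theorem stmt_6 (w0 w1 : EuclideanSpace ℝ (Fin 4))
    (hli : LinearIndependent ℝ ![w0, w1]) :
    ∀ N1 ∈ nhds w1, ∃ w2 ∈ N1, ∃ N0 ∈ nhds w0, ∀ w0' ∈ N0, ∃ w3 ∈ N1,
      w0' ∈ Submodule.span ℝ {w1, w2, w3} ∧
      w0' ∉ Submodule.span ℝ ({w1} : Set (EuclideanSpace ℝ (Fin 4))) ∧
      w0' ∉ Submodule.span ℝ ({w2} : Set (EuclideanSpace ℝ (Fin 4))) ∧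
      w0' ∉ Submodule.span ℝ ({w3} : Set (EuclideanSpace ℝ (Fin 4))) := by
  intro N1 hN1
  rw [LinearIndependent.pair_iff] at hli
  have hw1 : w1 ≠ 0 := by
    intro h
    have := hli 0 1 (by simp [h])
    simp at this
  obtain ⟨ε, hε, hball⟩ := Metric.mem_nhds_iff.mp hN1
  set M : ℝ := ‖w0‖ + 1 with hM
  have hM0 : (0:ℝ) < M := by positivity
  set δ : ℝ := ε / (2 * M) with hδdef
  have hδ : 0 < δ := by positivity
  set w2 : EuclideanSpace ℝ (Fin 4) := w1 + δ • w0 with hw2def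
  have hw2mem : w2 ∈ N1 := by
    apply hball
    rw [Metric.mem_ball, dist_eq_norm]
    have : w2 - w1 = δ • w0 := by rw [hw2def]; abel
    rw [this, norm_smul, Real.norm_eq_abs, abs_of_pos hδ]
    calc δ * ‖w0‖ ≤ δ * M := by
          apply mul_le_mul_of_nonneg_left _ hδ.le
          rw [hM]; linarith
      _ = ε / 2 := by rw [hδdef]; field_simp
      _ < ε := by linarith
  refine ⟨w2, hw2mem, ?_⟩
  -- w0 ∉ span{w1}
  have h01 : w0 ∉ Submodule.span ℝ ({w1} : Set (EuclideanSpace ℝ (Fin 4))) := by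
    rw [Submodule.mem_span_singleton]
    rintro ⟨c, hc⟩
    have := hli 1 (-c) (by rw [one_smul, neg_smul, hc]; abel)
    simp at this
  -- w0 ∉ span{w2}
  have h02 : w0 ∉ Submodule.span ℝ ({w2} : Set (EuclideanSpace ℝ (Fin 4))) := by
    rw [Submodule.mem_span_singleton]
    rintro ⟨c, hc⟩
    have hc' : (c * δ - 1) • w0 + c • w1 = 0 := by
      rw [hw2def] at hc
      linear_combination (norm := module) hc
    obtain ⟨h1, h2⟩ := hli _ _ hc'
    rw [h2, zero_mul] at h1
    norm_num at h1
  have hclosed1 : IsClosed ((Submodule.span ℝ ({w1} : Set (EuclideanSpace ℝ (Fin 4))) :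
      Submodule ℝ (EuclideanSpace ℝ (Fin 4))) : Set (EuclideanSpace ℝ (Fin 4))) :=
    Submodule.closed_of_finiteDimensional _
  have hclosed2 : IsClosed ((Submodule.span ℝ ({w2} : Set (EuclideanSpace ℝ (Fin 4))) :
      Submodule ℝ (EuclideanSpace ℝ (Fin 4))) : Set (EuclideanSpace ℝ (Fin 4))) :=
    Submodule.closed_of_finiteDimensional _
  refine ⟨Metric.ball w0 1 ∩ ((Submodule.span ℝ ({w1} : Set (EuclideanSpace ℝ (Fin 4))) : Set _)ᶜ
      ∩ (Submodule.span ℝ ({w2} : Set (EuclideanSpace ℝ (Fin 4))) : Set _)ᶜ), ?_, ?_⟩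
  · apply Filter.inter_mem (Metric.ball_mem_nhds _ one_pos)
    exact Filter.inter_mem (hclosed1.isOpen_compl.mem_nhds h01)
      (hclosed2.isOpen_compl.mem_nhds h02)
  intro w0' hw0'
  obtain ⟨hball0, hns1, hns2⟩ := hw0'
  have hnorm : ‖w0'‖ < M := by
    have : ‖w0' - w0‖ < 1 := by rw [← dist_eq_norm]; exact hball0
    calc ‖w0'‖ = ‖w0' - w0 + w0‖ := by rw [sub_add_cancel]
      _ ≤ ‖w0' - w0‖ + ‖w0‖ := norm_add_le _ _
      _ < 1 + ‖w0‖ := by linarith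
      _ = M := by rw [hM]; ring
  set w3 : EuclideanSpace ℝ (Fin 4) := w1 + δ • w0' with hw3def
  have hw3mem : w3 ∈ N1 := by
    apply hball
    rw [Metric.mem_ball, dist_eq_norm]
    have : w3 - w1 = δ • w0' := by rw [hw3def]; abel
    rw [this, norm_smul, Real.norm_eq_abs, abs_of_pos hδ]
    calc δ * ‖w0'‖ < δ * M := by
          exact mul_lt_mul_of_pos_left hnorm hδ
      _ = ε / 2 := by rw [hδdef]; field_simp
      _ < ε := by linarith
  refine ⟨w3, hw3mem, ?_, fun h => hns1 h, fun h => hns2 h, ?_⟩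
  · -- w0' ∈ span {w1, w2, w3}
    have h1 : w1 ∈ Submodule.span ℝ ({w1, w2, w3} : Set (EuclideanSpace ℝ (Fin 4))) :=
      Submodule.subset_span (by simp)
    have h3 : w3 ∈ Submodule.span ℝ ({w1, w2, w3} : Set (EuclideanSpace ℝ (Fin 4))) :=
      Submodule.subset_span (by simp)
    have : w0' = δ⁻¹ • (w3 - w1) := by
      rw [hw3def]
      rw [show w1 + δ • w0' - w1 = δ • w0' by abel, smul_smul, inv_mul_cancel₀ hδ.ne', one_smul]
    rw [this]
    exact Submodule.smul_mem _ _ (Submodule.sub_mem _ h3 h1)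
  · -- w0' ∉ span{w3}
    rw [Submodule.mem_span_singleton]
    rintro ⟨c, hc⟩
    rw [hw3def, smul_add, smul_smul] at hc
    have key : (1 - c * δ) • w0' = c • w1 := by
      linear_combination (norm := module) -hc
    by_cases h : 1 - c * δ = 0
    · rw [h, zero_smul] at key
      have hcne : c ≠ 0 := by
        intro hc0; rw [hc0] at h; norm_num at h
      exact hw1 (by
        have := key.symm
        rwa [smul_eq_zero, or_iff_right hcne] at this)
    · apply hns1
      rw [SetLike.mem_coe, Submodule.mem_span_singleton]
      refine ⟨(1 - c * δ)⁻¹ * c, ?_⟩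
      rw [mul_smul, ← key, smul_smul, inv_mul_cancel₀ h, one_smul]
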